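/- Let A=(S,R) be an argumentation network (S possibly infinite) and let M be a two-world constant-domain predicate G3 model with domain S in which R is interpreted by the attack relation of A, such that t forces each of (A1),(A2),(B1),(B2). Define λ_M(x)=in if x∈ι_t, λ_M(x)=out if x∉ι_s, λ_M(x)=und if x∈ι_s∖ι_t, where ι_t ⊆ ι_s are the extensions of the predicate In at t and s. Then λ_M is a complete extension of A. -/

import Mathlib

/-! At `t` the constant `n` is false, so each axiom forced at `t` reduces to a classical
statement about the two extensions `ι_t ⊆ ι_s`: an argument is in `ι_t` iff none of its
attackers is in `ι_s`, and it is outside `ι_s` iff some attacker is in `ι_t`. Through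
`λ_M` these are Caminada's conditions (C1) and (C2), and (C3) follows from them for any
three-valued labelling. -/

/-- The three Caminada labels. -/
inductive Label where
  | in_ : Label
  | out : Label
  | und : Label
deriving DecidableEq

/-- Caminada labelling / complete extension of the network `(S, R)`. -/
def IsCompleteExt {S : Type} (R : S → S → Prop) (l : S → Label) : Prop :=
  (∀ x, l x = .in_ ↔ ∀ y, R y x → l y = .out) ∧
  (∀ x, l x = .out ↔ ∃ y, R y x ∧ l y = .in_) ∧
  (∀ x, l x = .und ↔ ((∀ y, R y x → l y ≠ .in_) ∧ ∃ y, R y x ∧ l y = .und))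

/- Two-world constant-domain predicate G3 model: worlds are `Bool` with
`false = t < true = s`; `R` is interpreted world-independently; the unary
predicate `In` is interpreted by `iota w`, with `iota false ⊆ iota true`
(persistence).  Below, the intuitionistic forcing of each axiom is unfolded:
`∀` and `→` and `¬` quantify over all worlds `≥` the current one, `n` holds
exactly at world `s = true`. -/

/-- `w ⊨ (A1)`, i.e. `∀x[In(x) → (n ∨ ∀y(yRx → ¬In(y)))]` at world `w`. -/
def fA1 {S : Type} (R : S → S → Prop) (iota : Bool → S → Prop) (w : Bool) : Prop :=
  ∀ b, w ≤ b → ∀ x : S, ∀ c, b ≤ c → iota c x →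
    (c = true ∨ ∀ e, c ≤ e → ∀ y : S, ∀ f, e ≤ f → R y x → ∀ g, f ≤ g → ¬ iota g y)

/-- `w ⊨ (A2)`, i.e. `∀x[∀y(yRx → ¬In(y)) → (n ∨ In(x))]` at world `w`. -/
def fA2 {S : Type} (R : S → S → Prop) (iota : Bool → S → Prop) (w : Bool) : Prop :=
  ∀ b, w ≤ b → ∀ x : S, ∀ c, b ≤ c →
    (∀ e, c ≤ e → ∀ y : S, ∀ f, e ≤ f → R y x → ∀ g, f ≤ g → ¬ iota g y) →
    (c = true ∨ iota c x)

/-- `w ⊨ (B1)`, i.e. `∀x[¬In(x) → (n ∨ ∃y(yRx ∧ In(y)))]` at world `w`. -/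
def fB1 {S : Type} (R : S → S → Prop) (iota : Bool → S → Prop) (w : Bool) : Prop :=
  ∀ b, w ≤ b → ∀ x : S, ∀ c, b ≤ c → (∀ d, c ≤ d → ¬ iota d x) →
    (c = true ∨ ∃ y : S, R y x ∧ iota c y)

/-- `w ⊨ (B2)`, i.e. `∀x[∃y(yRx ∧ In(y)) → (n ∨ ¬In(x))]` at world `w`. -/
def fB2 {S : Type} (R : S → S → Prop) (iota : Bool → S → Prop) (w : Bool) : Prop :=
  ∀ b, w ≤ b → ∀ x : S, ∀ c, b ≤ c → (∃ y : S, R y x ∧ iota c y) →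
    (c = true ∨ ∀ d, c ≤ d → ¬ iota d x)

/-- The labelling `λ_M` of the model: `in` if `x ∈ ι_t`, `out` if `x ∉ ι_s`,
`und` if `x ∈ ι_s ∖ ι_t`. -/
noncomputable def lamM {S : Type} (iota : Bool → S → Prop) (x : S) : Label :=
  open Classical in
  if iota false x then .in_ else if iota true x then .und else .out

theorem isCompleteExt_of_in_out {S : Type} {R : S → S → Prop} {l : S → Label}
    (hin : ∀ x, l x = .in_ ↔ ∀ y, R y x → l y = .out)
    (hout : ∀ x, l x = .out ↔ ∃ y, R y x ∧ l y = .in_) : IsCompleteExt R l := by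
  refine ⟨hin, hout, fun x => ?_⟩
  have hund : ∀ z, l z = .und ↔ l z ≠ .in_ ∧ l z ≠ .out := fun z => by cases l z <;> simp
  rw [hund, ne_eq, hin, ne_eq, hout]
  push Not
  constructor
  · rintro ⟨⟨y, hyx, hy⟩, hnot⟩
    exact ⟨hnot, y, hyx, (hund y).2 ⟨hnot y hyx, hy⟩⟩
  · rintro ⟨hnot, y, hyx, hy⟩
    exact ⟨⟨y, hyx, ((hund y).1 hy).2⟩, hnot⟩

section TwoWorldModel

variable {S : Type} {R : S → S → Prop} {iota : Bool → S → Prop}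

theorem iota_true_of_iota (hpers : ∀ x, iota false x → iota true x) {w : Bool} {x : S}
    (hx : iota w x) : iota true x := by
  cases w
  · exact hpers x hx
  · exact hx

theorem lamM_eq_in_iff {x : S} : lamM iota x = .in_ ↔ iota false x := by
  classical
  unfold lamM
  split_ifs <;> simp_all

theorem lamM_eq_out_iff (hpers : ∀ x, iota false x → iota true x) {x : S} :
    lamM iota x = .out ↔ ¬ iota true x := by
  classical
  unfold lamM
  split_ifs <;> simp_all

theorem fA1.not_iota_true_of_attacks (h1 : fA1 R iota false) {x y : S} (hx : iota false x)
    (hyx : R y x) : ¬ iota true y :=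
  (h1 false le_rfl x false le_rfl hx).resolve_left Bool.false_ne_true
    false le_rfl y false le_rfl hyx true (Bool.false_le _)

theorem fA2.iota_false_of_forall (hpers : ∀ x, iota false x → iota true x)
    (h2 : fA2 R iota false) {x : S} (hx : ∀ y, R y x → ¬ iota true y) : iota false x :=
  (h2 false le_rfl x false le_rfl fun _ _ y _ _ hyx _ _ hy =>
    hx y hyx (iota_true_of_iota hpers hy)).resolve_left Bool.false_ne_true

theorem fB1.exists_attacker_of_not_iota_true (hpers : ∀ x, iota false x → iota true x)
    (h3 : fB1 R iota false) {x : S} (hx : ¬ iota true x) : ∃ y, R y x ∧ iota false y :=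
  (h3 false le_rfl x false le_rfl fun _ _ hd =>
    hx (iota_true_of_iota hpers hd)).resolve_left Bool.false_ne_true

theorem fB2.not_iota_true_of_attacks (h4 : fB2 R iota false) {x y : S} (hyx : R y x)
    (hy : iota false y) : ¬ iota true x :=
  (h4 false le_rfl x false le_rfl ⟨y, hyx, hy⟩).resolve_left Bool.false_ne_true
    true (Bool.false_le _)

end TwoWorldModel

theorem stmt10_general {S : Type} (R : S → S → Prop) (iota : Bool → S → Prop)
    (hpers : ∀ x, iota false x → iota true x)
    (h1 : fA1 R iota false) (h2 : fA2 R iota false)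
    (h3 : fB1 R iota false) (h4 : fB2 R iota false) :
    IsCompleteExt R (lamM iota) := by
  refine isCompleteExt_of_in_out (fun x => ?_) (fun x => ?_)
  · simp only [lamM_eq_in_iff, lamM_eq_out_iff hpers]
    exact ⟨fun hx _ => h1.not_iota_true_of_attacks hx, h2.iota_false_of_forall hpers⟩
  · simp only [lamM_eq_in_iff, lamM_eq_out_iff hpers]
    exact ⟨h3.exists_attacker_of_not_iota_true hpers,
      fun ⟨_, hyx, hy⟩ => h4.not_iota_true_of_attacks hyx hy⟩

/-- If the two-world constant-domain predicate G3 model with domain `S`,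
attack relation `R` and persistent interpretation `iota` of `In` forces each of
(A1),(A2),(B1),(B2) at `t`, then `λ_M` is a complete extension of `(S,R)`. -/
theorem stmt10 {S : Type} [Nonempty S] (R : S → S → Prop) (iota : Bool → S → Prop)
    (hpers : ∀ x, iota false x → iota true x)
    (h1 : fA1 R iota false) (h2 : fA2 R iota false)
    (h3 : fB1 R iota false) (h4 : fB2 R iota false) :
    IsCompleteExt R (lamM iota) :=
  stmt10_general R iota hpers h1 h2 h3 h4
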